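/- If F is subexponential, then for every fixed r > 0, J(x,r) = ∫_r^{x-r} F̄(x-y)/F̄(x) dF(y) converges to F̄(r) as x → ∞. -/

import Mathlib

open Filter MeasureTheory Set

noncomputable def tail (μ : Measure ℝ) (x : ℝ) : ℝ := (μ (Set.Ioi x)).toReal

noncomputable def convn (μ : Measure ℝ) : ℕ → Measure ℝ
  | 0 => Measure.dirac 0
  | n + 1 => ((convn μ n).prod μ).map (fun p : ℝ × ℝ => p.1 + p.2)

/-!
Write `T = tail μ`, `T₂ = tail (convn μ 2)` and `F = 1 - T`. Since `μ` lives on `[0, ∞)`,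
`T₂(x) = T(x) + ∫_{(-∞, x]} T(x - y) dμ(y)`, so subexponentiality says exactly that this integral
is asymptotic to `T(x)`. Bounding the integrand below by `T(x)` on `[0, r]` and by `T(x - r)` on
`(r, x]` then forces `T(x - r) ∼ T(x)` (`μ` is long-tailed). With long tails, the parts of the
integral over `(-∞, r]` and `(x - r, x]` are `∼ F(r) T(x)` and `o(T(x))`, and `J(x, r)` is what
remains: `1 - F(r) - 0 = T(r)`.
-/

open scoped Topology
open ProbabilityTheory

lemma setIntegral_Iic_eq_add {ν : Measure ℝ} {f : ℝ → ℝ} (hf : Integrable f ν) {a b : ℝ}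
    (hab : a ≤ b) : ∫ y in Iic b, f y ∂ν = ∫ y in Iic a, f y ∂ν + ∫ y in Ioc a b, f y ∂ν := by
  rw [← Iic_union_Ioc_eq_Iic hab, setIntegral_union (Iic_disjoint_Ioc le_rfl) measurableSet_Ioc
    hf.integrableOn hf.integrableOn]

lemma setIntegral_Ioc_eq_sub {ν : Measure ℝ} {f : ℝ → ℝ} (hf : Integrable f ν) {a b c : ℝ}
    (hab : a ≤ b) (hbc : b ≤ c) :
    ∫ y in Ioc a b, f y ∂ν =
      ∫ y in Iic c, f y ∂ν - ∫ y in Iic a, f y ∂ν - ∫ y in Ioc b c, f y ∂ν := by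
  linarith [setIntegral_Iic_eq_add hf hab, setIntegral_Iic_eq_add hf (hab.trans hbc),
    setIntegral_Iic_eq_add hf hbc]

section Tail

variable {μ : Measure ℝ}

lemma tail_eq_measureReal (x : ℝ) : tail μ x = μ.real (Ioi x) := rfl

lemma antitone_tail [IsFiniteMeasure μ] : Antitone (tail μ) := fun _ _ h =>
  measureReal_mono (Ioi_subset_Ioi h)

lemma monotone_tail_sub [IsFiniteMeasure μ] (x : ℝ) : Monotone fun y => tail μ (x - y) :=
  fun _ _ h => antitone_tail (by linarith)

lemma integrable_tail_sub [IsFiniteMeasure μ] (x : ℝ) :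
    Integrable (fun y => tail μ (x - y)) μ :=
  .of_bound (monotone_tail_sub x).measurable.aestronglyMeasurable (μ.real univ)
    (ae_of_all _ fun _ => by
      rw [tail_eq_measureReal, Real.norm_of_nonneg measureReal_nonneg]
      exact measureReal_mono (subset_univ _))

lemma tail_eq_one_sub_cdf [IsProbabilityMeasure μ] (x : ℝ) : tail μ x = 1 - cdf μ x := by
  rw [cdf_eq_real, tail_eq_measureReal, ← compl_Iic, measureReal_compl measurableSet_Iic,
    probReal_univ]

lemma measureReal_Iic_eq_one_sub_tail [IsProbabilityMeasure μ] (x : ℝ) :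
    μ.real (Iic x) = 1 - tail μ x := by
  rw [tail_eq_one_sub_cdf, cdf_eq_real, sub_sub_cancel]

lemma tendsto_tail_atTop [IsProbabilityMeasure μ] : Tendsto (tail μ) atTop (𝓝 0) := by
  simpa [funext (tail_eq_one_sub_cdf (μ := μ))] using (tendsto_cdf_atTop μ).const_sub 1

lemma measureReal_Ioc_eq_tail_sub [IsFiniteMeasure μ] {a b : ℝ} (hab : a ≤ b) :
    μ.real (Ioc a b) = tail μ a - tail μ b := by
  rw [← Ioi_sdiff_Ioi, measureReal_sdiff (Ioi_subset_Ioi hab) measurableSet_Ioi]; rfl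

lemma tail_eq_one_of_neg [IsProbabilityMeasure μ] (hsupp : μ (Iio 0) = 0) {x : ℝ}
    (hx : x < 0) : tail μ x = 1 := by
  have : μ.real (Iic x) = 0 :=
    (measureReal_eq_zero_iff).2 (measure_mono_null (Iic_subset_Iio.2 hx) hsupp)
  rw [tail_eq_one_sub_cdf, cdf_eq_real, this, sub_zero]

lemma setIntegral_tail_sub_le [IsFiniteMeasure μ] (x : ℝ) {s : Set ℝ} (hs : MeasurableSet s)
    {a : ℝ} (ha : ∀ y ∈ s, y ≤ a) :
    ∫ y in s, tail μ (x - y) ∂μ ≤ μ.real s * tail μ (x - a) := by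
  rw [← smul_eq_mul, ← setIntegral_const]
  exact setIntegral_mono_on (integrable_tail_sub x).integrableOn (integrable_const _).integrableOn
    hs fun y hy => monotone_tail_sub x (ha y hy)

lemma le_setIntegral_tail_sub [IsFiniteMeasure μ] (x : ℝ) {s : Set ℝ} (hs : MeasurableSet s)
    {a : ℝ} (ha : ∀ᵐ y ∂μ, y ∈ s → a ≤ y) :
    μ.real s * tail μ (x - a) ≤ ∫ y in s, tail μ (x - y) ∂μ := by
  rw [← smul_eq_mul, ← setIntegral_const]
  exact setIntegral_mono_on_ae (integrable_const _).integrableOn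
    (integrable_tail_sub x).integrableOn hs (ha.mono fun y h hy => monotone_tail_sub x (h hy))

lemma convn_one [SFinite μ] : convn μ 1 = μ := by
  rw [convn, convn, Measure.dirac_prod, Measure.map_map (by fun_prop) (by fun_prop)]
  simp [Function.comp_def]

lemma tail_convn_two [IsFiniteMeasure μ] (x : ℝ) :
    tail (convn μ 2) x = ∫ y, tail μ (x - y) ∂μ := by
  have hadd : Measurable fun p : ℝ × ℝ => p.1 + p.2 := by fun_prop
  have hmono : Monotone fun y => μ (Ioi (x - y)) := fun _ _ h =>
    measure_mono (Ioi_subset_Ioi (by linarith))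
  rw [tail, convn, convn_one, Measure.map_apply hadd measurableSet_Ioi,
    Measure.prod_apply (hadd measurableSet_Ioi)]
  have hpre : ∀ y, Prod.mk y ⁻¹' ((fun p : ℝ × ℝ => p.1 + p.2) ⁻¹' Ioi x) = Ioi (x - y) :=
    fun y => by ext z; simp [sub_lt_iff_lt_add']
  simp_rw [hpre]
  exact (integral_toReal hmono.measurable.aemeasurable
    (ae_of_all _ fun _ => measure_lt_top _ _)).symm

lemma ae_nonneg_of_measure_Iio_eq_zero (hsupp : μ (Iio 0) = 0) : ∀ᵐ y ∂μ, 0 ≤ y :=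
  ae_iff.2 (by simp only [not_le]; exact hsupp)

lemma tail_convn_two_eq_tail_add [IsProbabilityMeasure μ] (hsupp : μ (Iio 0) = 0) (x : ℝ) :
    tail (convn μ 2) x = tail μ x + ∫ y in Iic x, tail μ (x - y) ∂μ := by
  have hone : ∀ y ∈ Ioi x, tail μ (x - y) = 1 := fun y hy =>
    tail_eq_one_of_neg hsupp (sub_neg.2 hy)
  rw [tail_convn_two, ← integral_add_compl measurableSet_Iic (integrable_tail_sub x), compl_Iic,
    setIntegral_congr_fun measurableSet_Ioi hone, setIntegral_const, smul_eq_mul, mul_one,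
    add_comm, tail_eq_measureReal]

end Tail

section Asymptotics

variable {μ : Measure ℝ} [IsProbabilityMeasure μ]

lemma tendsto_setIntegral_Iic_div_tail (hsupp : μ (Iio 0) = 0) (hpos : ∀ x, 0 < tail μ x)
    (hsub : Tendsto (fun x => tail (convn μ 2) x / tail μ x) atTop (𝓝 2)) :
    Tendsto (fun x => (∫ y in Iic x, tail μ (x - y) ∂μ) / tail μ x) atTop (𝓝 1) := by
  have hsplit : ∀ x, tail (convn μ 2) x / tail μ x - 1 =
      (∫ y in Iic x, tail μ (x - y) ∂μ) / tail μ x := fun x => by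
    rw [tail_convn_two_eq_tail_add hsupp, add_div, div_self (hpos x).ne', add_sub_cancel_left]
  have := hsub.sub_const 1
  rw [show (2 : ℝ) - 1 = 1 by norm_num] at this
  simpa only [hsplit] using this

lemma le_setIntegral_Iic_tail_sub (hsupp : μ (Iio 0) = 0) {r x : ℝ} (hrx : r ≤ x) :
    (1 - tail μ r) * tail μ x + (tail μ r - tail μ x) * tail μ (x - r) ≤
      ∫ y in Iic x, tail μ (x - y) ∂μ := by
  rw [setIntegral_Iic_eq_add (integrable_tail_sub x) hrx, ← measureReal_Iic_eq_one_sub_tail,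
    ← measureReal_Ioc_eq_tail_sub hrx]
  gcongr
  · simpa using le_setIntegral_tail_sub x measurableSet_Iic
      ((ae_nonneg_of_measure_Iio_eq_zero hsupp).mono fun y hy _ => hy)
  · exact le_setIntegral_tail_sub x measurableSet_Ioc (ae_of_all _ fun y hy => hy.1.le)

lemma tendsto_tail_sub_div_tail (hsupp : μ (Iio 0) = 0) (hpos : ∀ x, 0 < tail μ x)
    (hG : Tendsto (fun x => (∫ y in Iic x, tail μ (x - y) ∂μ) / tail μ x) atTop (𝓝 1))
    {r : ℝ} (hr : 0 ≤ r) :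
    Tendsto (fun x => tail μ (x - r) / tail μ x) atTop (𝓝 1) := by
  have hT : Tendsto (tail μ) atTop (𝓝 0) := tendsto_tail_atTop
  have hupper : Tendsto (fun x => ((∫ y in Iic x, tail μ (x - y) ∂μ) / tail μ x - (1 - tail μ r)) /
      (tail μ r - tail μ x)) atTop (𝓝 1) := by
    have := (hG.sub_const (1 - tail μ r)).div (hT.const_sub (tail μ r))
      (by simpa using (hpos r).ne')
    rwa [sub_sub_cancel, sub_zero, div_self (hpos r).ne'] at this
  refine tendsto_of_tendsto_of_tendsto_of_le_of_le' tendsto_const_nhds hupper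
    (Eventually.of_forall fun x => (one_le_div (hpos x)).2 (antitone_tail (by linarith))) ?_
  filter_upwards [eventually_ge_atTop r, hT.eventually_lt_const (hpos r)] with x hrx hx
  rw [le_div_iff₀ (by linarith), le_sub_iff_add_le, le_div_iff₀ (hpos x)]
  calc _ = (1 - tail μ r) * tail μ x + (tail μ r - tail μ x) * tail μ (x - r) := by
        field_simp [(hpos x).ne']; ring
    _ ≤ _ := le_setIntegral_Iic_tail_sub hsupp hrx

lemma tendsto_setIntegral_Iic_const_div_tail (hsupp : μ (Iio 0) = 0) (hpos : ∀ x, 0 < tail μ x)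
    {r : ℝ} (hlong : Tendsto (fun x => tail μ (x - r) / tail μ x) atTop (𝓝 1)) :
    Tendsto (fun x => (∫ y in Iic r, tail μ (x - y) ∂μ) / tail μ x) atTop
      (𝓝 (μ.real (Iic r))) := by
  refine tendsto_of_tendsto_of_tendsto_of_le_of_le tendsto_const_nhds
    (by simpa using hlong.const_mul (μ.real (Iic r))) (fun x => ?_) (fun x => ?_)
  · rw [le_div_iff₀ (hpos x)]
    simpa using le_setIntegral_tail_sub x measurableSet_Iic
      ((ae_nonneg_of_measure_Iio_eq_zero hsupp).mono fun y hy _ => hy)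
  · rw [← mul_div_assoc, div_le_div_iff_of_pos_right (hpos x)]
    exact setIntegral_tail_sub_le x measurableSet_Iic fun _ hy => hy

lemma tendsto_setIntegral_Ioc_sub_div_tail (hpos : ∀ x, 0 < tail μ x) {r : ℝ} (hr : 0 ≤ r)
    (hlong : Tendsto (fun x => tail μ (x - r) / tail μ x) atTop (𝓝 1)) :
    Tendsto (fun x => (∫ y in Ioc (x - r) x, tail μ (x - y) ∂μ) / tail μ x) atTop (𝓝 0) := by
  refine tendsto_of_tendsto_of_tendsto_of_le_of_le tendsto_const_nhds
    (by simpa using hlong.sub_const 1) (fun x => ?_) (fun x => ?_)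
  · exact div_nonneg (setIntegral_nonneg measurableSet_Ioc fun _ _ => measureReal_nonneg)
      (hpos x).le
  · rw [div_sub_one (hpos x).ne', div_le_div_iff_of_pos_right (hpos x),
      ← measureReal_Ioc_eq_tail_sub (by linarith)]
    calc _ ≤ μ.real (Ioc (x - r) x) * tail μ (x - x) :=
          setIntegral_tail_sub_le x measurableSet_Ioc fun _ hy => hy.2
      _ ≤ μ.real (Ioc (x - r) x) := mul_le_of_le_one_right measureReal_nonneg measureReal_le_one

end Asymptotics

/-- If F is subexponential, then for fixed r > 0,
J(x,r) = ∫_r^{x-r} F̄(x-y)/F̄(x) dF(y) → F̄(r) as x → ∞. -/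
theorem J_tendsto_tail (μ : Measure ℝ) [IsProbabilityMeasure μ]
    (hsupp : μ (Set.Iio 0) = 0) (hunb : ∀ x, 0 < μ (Set.Ioi x))
    (hsub : Tendsto (fun x => tail (convn μ 2) x / tail μ x) atTop (nhds 2))
    (r : ℝ) (hr : 0 < r) :
    Tendsto (fun x => ∫ y in Set.Ioc r (x - r), tail μ (x - y) / tail μ x ∂μ)
      atTop (nhds (tail μ r)) := by
  have hpos : ∀ x, 0 < tail μ x := fun x => ENNReal.toReal_pos (hunb x).ne' (measure_ne_top _ _)
  have hG := tendsto_setIntegral_Iic_div_tail hsupp hpos hsub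
  have hlong := tendsto_tail_sub_div_tail hsupp hpos hG hr.le
  have hlim := (hG.sub (tendsto_setIntegral_Iic_const_div_tail hsupp hpos hlong)).sub
    (tendsto_setIntegral_Ioc_sub_div_tail hpos hr.le hlong)
  rw [measureReal_Iic_eq_one_sub_tail, sub_sub_cancel, sub_zero] at hlim
  refine hlim.congr' ?_
  filter_upwards [eventually_ge_atTop (2 * r)] with x hx
  rw [integral_div, setIntegral_Ioc_eq_sub (integrable_tail_sub x) (b := x - r) (by linarith)
    (by linarith), sub_div, sub_div]
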